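/- Let p be a probability mass function on a finite set 𝒳 and let S = (U_1, …, U_D) be a D-ary partition of 𝒳 that maximizes the partition entropy H(S) = −Σ_{j=1}^D p(U_j) log p(U_j) among all D-ary partitions of 𝒳. Then for all indices j, q ∈ {1, …, D} and every element u ∈ U_j with p(u) > 0, one has p(U_j) − p(U_q) ≤ p(u). (Otherwise moving u from U_j to U_q would strictly increase the partition entropy, contradicting optimality.) -/
import Mathlib


open Finset

/-- A `D`-ary partition of the finite type `α`: the parts are pairwise disjoint and
cover everything. -/
def IsDPartition {α : Type*} [Fintype α] [DecidableEq α] {D : ℕ}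
    (U : Fin D → Finset α) : Prop :=
  (∀ j k, j ≠ k → Disjoint (U j) (U k)) ∧ Finset.univ.biUnion U = Finset.univ

/-- Partition entropy `H(S) = -∑ⱼ p(Uⱼ) log p(Uⱼ)` (convention `0 log 0 = 0`). -/
noncomputable def partitionEntropy {α : Type*} {D : ℕ}
    (p : α → ℝ) (U : Fin D → Finset α) : ℝ :=
  -∑ j, (∑ x ∈ U j, p x) * Real.log (∑ x ∈ U j, p x)

lemma entropy_eq_negMulLog {α : Type*} {D : ℕ} (p : α → ℝ) (U : Fin D → Finset α) :
    partitionEntropy p U = ∑ j, Real.negMulLog (∑ x ∈ U j, p x) := by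
  simp [partitionEntropy, Real.negMulLog_eq_neg, Finset.sum_neg_distrib]

lemma concave_shift {a b e : ℝ} (hb : 0 ≤ b) (he : 0 < e) (hlt : b + e < a) :
    Real.negMulLog a + Real.negMulLog b
      < Real.negMulLog (a - e) + Real.negMulLog (b + e) := by
  have hab : b < a := by linarith
  set t : ℝ := e / (a - b) with ht
  have hab' : (0:ℝ) < a - b := by linarith
  have ht0 : 0 < t := div_pos he hab'
  have ht1 : t < 1 := (div_lt_one hab').mpr (by linarith)
  have hte : t * (a - b) = e := div_mul_cancel₀ e (ne_of_gt hab')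
  have h1 : (1 - t) • b + t • a = b + e := by
    simp only [smul_eq_mul]; linear_combination hte
  have h2 : t • b + (1 - t) • a = a - e := by
    simp only [smul_eq_mul]; linear_combination -hte
  have hbmem : b ∈ Set.Ici (0:ℝ) := hb
  have hamem : a ∈ Set.Ici (0:ℝ) := by simp; linarith
  have hc := Real.strictConcaveOn_negMulLog.2 hbmem hamem (ne_of_lt hab)
  have hA := hc (a := 1 - t) (b := t) (by linarith) ht0 (by ring)
  have hB := hc (a := t) (b := 1 - t) ht0 (by linarith) (by ring)
  rw [h1] at hA
  rw [h2] at hB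
  simp only [smul_eq_mul] at hA hB
  nlinarith

/-- If a `D`-ary partition maximizes partition entropy, then for any parts
`U j`, `U q` and any element `u ∈ U j` with `p u > 0`, one has `p(U j) - p(U q) ≤ p u`. -/
theorem optimal_partition_balanced
    {α : Type*} [Fintype α] [DecidableEq α] {D : ℕ}
    (p : α → ℝ) (hp : ∀ x, 0 ≤ p x) (hsum : ∑ x, p x = 1)
    (U : Fin D → Finset α) (hU : IsDPartition U)
    (hopt : ∀ V : Fin D → Finset α, IsDPartition V →
      partitionEntropy p V ≤ partitionEntropy p U) :
    ∀ (j q : Fin D) (u : α), u ∈ U j → 0 < p u →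
      (∑ x ∈ U j, p x) - (∑ x ∈ U q, p x) ≤ p u := by
  intro j q u hu hpu
  by_cases hjq : j = q
  · subst hjq; linarith
  by_contra hlt
  push_neg at hlt
  set a := ∑ x ∈ U j, p x with ha
  set b := ∑ x ∈ U q, p x with hb
  have huniq : ∀ k, u ∈ U k → k = j := by
    intro k hk
    by_contra hkj
    exact (Finset.disjoint_left.mp (hU.1 k j hkj) hk) hu
  have hunotq : u ∉ U q := fun h => hjq ((huniq q h).symm)
  set V : Fin D → Finset α :=
    Function.update (Function.update U j ((U j).erase u)) q (insert u (U q)) with hV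
  have hmem : ∀ k x, x ∈ V k ↔ (if x = u then k = q else x ∈ U k) := by
    intro k x
    by_cases hkq : k = q
    · subst hkq
      simp only [hV, Function.update_self, Finset.mem_insert]
      by_cases hxu : x = u <;> simp [hxu, hunotq]
    · by_cases hkj : k = j
      · subst hkj
        rw [hV, Function.update_of_ne hkq, Function.update_self]
        by_cases hxu : x = u <;> simp [hxu, Finset.mem_erase, hkq]
      · rw [hV, Function.update_of_ne hkq, Function.update_of_ne hkj]
        by_cases hxu : x = u
        · subst hxu
          simp only [if_pos rfl]
          exact iff_of_false (fun h => hkj (huniq k h)) hkq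
        · simp [hxu]
  have hVpart : IsDPartition V := by
    constructor
    · intro k l hkl
      rw [Finset.disjoint_left]
      intro x hxk hxl
      rw [hmem] at hxk hxl
      by_cases hxu : x = u
      · simp [hxu] at hxk hxl; exact hkl (hxk.trans hxl.symm)
      · simp [hxu] at hxk hxl
        exact (Finset.disjoint_left.mp (hU.1 k l hkl) hxk) hxl
    · ext x
      simp only [Finset.mem_biUnion, Finset.mem_univ, iff_true, true_and]
      by_cases hxu : x = u
      · exact ⟨q, by rw [hmem]; simp [hxu]⟩
      · have : x ∈ Finset.univ.biUnion U := hU.2 ▸ Finset.mem_univ x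
        obtain ⟨k, _, hk⟩ := Finset.mem_biUnion.mp this
        exact ⟨k, by rw [hmem]; simp [hxu, hk]⟩
  have hsumV : ∀ k, ∑ x ∈ V k, p x =
      Function.update (Function.update (fun k => ∑ x ∈ U k, p x) j (a - p u)) q (b + p u) k := by
    intro k
    by_cases hkq : k = q
    · subst hkq
      rw [hV, Function.update_self, Function.update_self, Finset.sum_insert hunotq]
      ring
    · by_cases hkj : k = j
      · subst hkj
        rw [hV, Function.update_of_ne hkq, Function.update_self,
          Function.update_of_ne hkq, Function.update_self,
          Finset.sum_erase_eq_sub hu]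
      · rw [hV, Function.update_of_ne hkq, Function.update_of_ne hkj,
          Function.update_of_ne hkq, Function.update_of_ne hkj]
  have hkey : partitionEntropy p U < partitionEntropy p V := by
    rw [entropy_eq_negMulLog, entropy_eq_negMulLog]
    have hrw : ∀ k, Real.negMulLog (∑ x ∈ V k, p x) =
        Function.update (Function.update (fun k => Real.negMulLog (∑ x ∈ U k, p x)) j
          (Real.negMulLog (a - p u))) q (Real.negMulLog (b + p u)) k := by
      intro k
      rw [hsumV k]
      by_cases hkq : k = q
      · subst hkq; simp
      · by_cases hkj : k = j
        · subst hkj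
          rw [Function.update_of_ne hkq, Function.update_self,
            Function.update_of_ne hkq, Function.update_self]
        · rw [Function.update_of_ne hkq, Function.update_of_ne hkj,
            Function.update_of_ne hkq, Function.update_of_ne hkj]
    rw [Finset.sum_congr rfl (fun k _ => hrw k)]
    rw [Finset.sum_update_of_mem (Finset.mem_univ q)]
    have hjmem : j ∈ Finset.univ \ {q} := by simp [hjq]
    rw [Finset.sum_update_of_mem hjmem]
    set G : Fin D → ℝ := fun k => Real.negMulLog (∑ x ∈ U k, p x) with hG
    have hqsplit : ∑ k, G k = G q + ∑ k ∈ Finset.univ \ {q}, G k := by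
      rw [Finset.sdiff_singleton_eq_erase, Finset.add_sum_erase _ _ (Finset.mem_univ q)]
    have hjsplit : ∑ k ∈ Finset.univ \ {q}, G k =
        G j + ∑ k ∈ (Finset.univ \ {q}) \ {j}, G k := by
      rw [Finset.sdiff_singleton_eq_erase j, Finset.add_sum_erase _ _ hjmem]
    rw [hqsplit, hjsplit]
    have hGq : G q = Real.negMulLog b := rfl
    have hGj : G j = Real.negMulLog a := rfl
    rw [hGq, hGj]
    have hbnn : 0 ≤ b := Finset.sum_nonneg fun x _ => hp x
    have := concave_shift hbnn hpu (by linarith : b + p u < a)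
    linarith
  exact absurd (hopt V hVpart) (not_le.mpr hkey)
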